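/- For every D ⊆ V∖B, the Gibbs measure satisfies P^τ_{w,β}({σ : every edge of γ(D) is unsatisfied for σ}) ≤ exp(−2β·Σ_{e∈γ(D)} |w_e|). -/
import Mathlib


open Finset

/-- The real value of a Boolean spin. -/
def sval (b : Bool) : ℝ := if b then 1 else -1

/-- The product `σ_x σ_y` of spin values over an unordered pair. -/
def sprod {V : Type*} (σ : V → Bool) (e : Sym2 V) : ℝ :=
  Sym2.lift ⟨fun x y => sval (σ x) * sval (σ y), fun x y => mul_comm _ _⟩ e

open scoped Classical in
/-- The energy `Σ_{{x,y}∈E} w_{xy} σ_x σ_y` of a spin configuration. -/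
noncomputable def energy {V : Type*} [Fintype V] (G : SimpleGraph V) (w : Sym2 V → ℝ)
    (σ : V → Bool) : ℝ :=
  ∑ e ∈ G.edgeFinset, w e * sprod σ e

open scoped Classical in
/-- The finite-volume Gibbs probability at inverse temperature `β` of the event `A`, with
boundary spins `τ` imposed on `B`. -/
noncomputable def gibbsProb {V : Type*} [Fintype V] (G : SimpleGraph V) (w : Sym2 V → ℝ)
    (β : ℝ) (B : Set V) (τ : V → Bool) (A : Set (V → Bool)) : ℝ :=
  (∑ σ : V → Bool, if (∀ v ∈ B, σ v = τ v) ∧ σ ∈ A then Real.exp (β * energy G w σ) else 0) /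
    ∑ σ : V → Bool, if ∀ v ∈ B, σ v = τ v then Real.exp (β * energy G w σ) else 0

open scoped Classical in
/-- `γ(D)`: the edges of `G` with exactly one endpoint in `D`. -/
noncomputable def edgeBd {V : Type*} [Fintype V] (G : SimpleGraph V) (D : Set V) :
    Finset (Sym2 V) :=
  G.edgeFinset.filter fun e => ∃ x ∈ D, ∃ y ∉ D, e = s(x, y)

lemma sval_not (b : Bool) : sval (!b) = -sval b := by cases b <;> simp [sval]

lemma abs_sval (b : Bool) : |sval b| = 1 := by cases b <;> simp [sval]

lemma sprod_mk {V : Type*} (σ : V → Bool) (x y : V) :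
    sprod σ s(x, y) = sval (σ x) * sval (σ y) := rfl

lemma abs_sprod {V : Type*} (σ : V → Bool) (e : Sym2 V) : |sprod σ e| = 1 := by
  induction e using Sym2.ind with
  | _ x y => rw [sprod_mk, abs_mul, abs_sval, abs_sval]; norm_num



lemma sum_pos_exists {α : Type*} (FI : Fintype α) (g : α → ℝ)
    (hg : ∀ a, 0 ≤ g a) (a₀ : α) (h₀ : 0 < g a₀) :
    0 < ∑ a ∈ @Finset.univ α FI, g a :=
  Finset.sum_pos' (fun a _ => hg a) ⟨a₀, @Finset.mem_univ α FI a₀, h₀⟩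

lemma sum_le_mul_sum_of_involutive {α : Type*} (FI : Fintype α) (g h : α → ℝ) (fl : α → α)
    (c : ℝ) (hinv : ∀ a, fl (fl a) = a) (hgh : ∀ a, g a ≤ c * h (fl a)) :
    (∑ a ∈ @Finset.univ α FI, g a) ≤ c * ∑ a ∈ @Finset.univ α FI, h a := by
  have hbij : Function.Bijective fl := Function.Involutive.bijective hinv
  calc (∑ a ∈ @Finset.univ α FI, g a) ≤ ∑ a ∈ @Finset.univ α FI, c * h (fl a) :=
        Finset.sum_le_sum fun a _ => hgh a
    _ = c * ∑ a ∈ @Finset.univ α FI, h (fl a) := by rw [Finset.mul_sum]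
    _ = c * ∑ a ∈ @Finset.univ α FI, h a := by
        congr 1
        exact @Fintype.sum_bijective α α ℝ FI FI _ fl hbij (fun a => h (fl a)) h (fun a => rfl)

theorem gibbs_unsatisfied_boundary_bound {V : Type*} [Fintype V] [DecidableEq V]
    (G : SimpleGraph V) (w : Sym2 V → ℝ) (β : ℝ) (hβ : 0 ≤ β) (B : Set V) (τ : V → Bool)
    (D : Set V) (hDB : D ⊆ Bᶜ) :
    gibbsProb G w β B τ {σ | ∀ e ∈ edgeBd G D, w e * sprod σ e < 0} ≤
      Real.exp (-(2 * β * ∑ e ∈ edgeBd G D, |w e|)) := by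
  classical
  set S : ℝ := ∑ e ∈ edgeBd G D, |w e| with hS
  set flip : (V → Bool) → (V → Bool) := fun σ v => if v ∈ D then !σ v else σ v with hflip
  have hflipinv : ∀ σ, flip (flip σ) = σ := by
    intro σ; funext v; by_cases h : v ∈ D <;> simp [hflip, h]
  have hinj : Function.Injective flip := Function.LeftInverse.injective hflipinv
  have hbd_mem : ∀ e, e ∈ edgeBd G D ↔
      e ∈ G.edgeFinset ∧ ∃ x ∈ D, ∃ y ∉ D, e = s(x, y) := by
    intro e; simp [edgeBd]
  have hss : edgeBd G D ⊆ G.edgeFinset := fun e he => ((hbd_mem e).1 he).1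
  -- behaviour of sprod under flip
  have hsprod_bd : ∀ σ, ∀ e ∈ edgeBd G D, sprod (flip σ) e = -sprod σ e := by
    intro σ e he
    obtain ⟨-, x, hx, y, hy, rfl⟩ := (hbd_mem e).1 he
    rw [sprod_mk, sprod_mk]
    simp only [hflip]
    rw [if_pos hx, if_neg hy, sval_not]; ring
  have hsprod_nbd : ∀ σ, ∀ e ∈ G.edgeFinset, e ∉ edgeBd G D →
      sprod (flip σ) e = sprod σ e := by
    intro σ e heE henbd
    induction e using Sym2.ind with
    | _ x y =>
      by_cases hx : x ∈ D
      · by_cases hy : y ∈ D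
        · rw [sprod_mk, sprod_mk]; simp only [hflip]
          rw [if_pos hx, if_pos hy, sval_not, sval_not]; ring
        · exact absurd ((hbd_mem _).2 ⟨heE, x, hx, y, hy, rfl⟩) henbd
      · by_cases hy : y ∈ D
        · exact absurd ((hbd_mem _).2 ⟨heE, y, hy, x, hx, Sym2.eq_swap⟩) henbd
        · rw [sprod_mk, sprod_mk]; simp only [hflip]
          rw [if_neg hx, if_neg hy]
  -- energy under flip
  have henergy : ∀ σ, energy G w (flip σ)
      = energy G w σ - 2 * ∑ e ∈ edgeBd G D, w e * sprod σ e := by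
    intro σ
    have h1 : energy G w (flip σ) = ∑ e ∈ G.edgeFinset,
        (w e * sprod σ e - (if e ∈ edgeBd G D then 2 * (w e * sprod σ e) else 0)) := by
      rw [energy]
      refine Finset.sum_congr rfl fun e heE => ?_
      by_cases hbd : e ∈ edgeBd G D
      · rw [if_pos hbd, hsprod_bd σ e hbd]; ring
      · rw [if_neg hbd, hsprod_nbd σ e heE hbd]; ring
    rw [h1, Finset.sum_sub_distrib, Finset.sum_ite_mem,
      Finset.inter_eq_right.2 hss, Finset.mul_sum]
    rw [energy]
  -- boundary condition of flip
  have hflipB : ∀ σ : V → Bool, (∀ v ∈ B, σ v = τ v) → ∀ v ∈ B, flip σ v = τ v := by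
    intro σ hσ v hv
    have hvD : v ∉ D := fun hvD => (hDB hvD) hv
    simp only [hflip]
    rw [if_neg hvD]; exact hσ v hv
  -- the key energy identity on the event
  have hkey : ∀ σ : V → Bool, (∀ e ∈ edgeBd G D, w e * sprod σ e < 0) →
      energy G w (flip σ) = energy G w σ + 2 * S := by
    intro σ hσ
    have : ∑ e ∈ edgeBd G D, w e * sprod σ e = -S := by
      rw [hS, ← Finset.sum_neg_distrib]
      refine Finset.sum_congr rfl fun e he => ?_
      have h1 : |w e * sprod σ e| = |w e| := by
        rw [abs_mul, abs_sprod, mul_one]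
      have h2 := hσ e he
      rw [← h1, abs_of_neg h2]; ring
    rw [henergy σ, this]; ring
  -- main argument
  rw [gibbsProb]
  refine (div_le_iff₀ ?_).2 ?_
  · apply sum_pos_exists _ _ ?_ τ ?_
    · intro σ
      split
      · exact (Real.exp_pos _).le
      · exact le_rfl
    · have h : ∀ v ∈ B, τ v = τ v := fun v _ => rfl
      rw [if_pos h]
      exact Real.exp_pos _
  · apply sum_le_mul_sum_of_involutive _ _ _ flip _ hflipinv
    intro σ
    by_cases hp : (∀ v ∈ B, σ v = τ v) ∧
        σ ∈ {σ : V → Bool | ∀ e ∈ edgeBd G D, w e * sprod σ e < 0}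
    · rw [if_pos hp, if_pos (hflipB σ hp.1)]
      refine le_of_eq ?_
      rw [hkey σ hp.2, ← Real.exp_add]
      ring_nf
    · rw [if_neg hp]
      refine mul_nonneg (Real.exp_pos _).le ?_
      split
      · exact (Real.exp_pos _).le
      · exact le_rfl
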